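/- Let q > 1 be real. The series e_q(z) := Σ_{n=0}^{∞} z^n/[n]_q! converges for every z ∈ ℂ and defines an entire function which satisfies the product formula e_q(z) = Π_{n=0}^{∞} (1 + (q−1) q^{−n−1} z) for all z ∈ ℂ. Consequently, the zeros of e_q are exactly the points q^{n}/(1−q) for integers n ≥ 1, and each of these is a simple zero. -/

import Mathlib

/-! The coefficients satisfy `(q^(n+1) - 1) / [n+1]_q! = (q - 1) / [n]_q!`, which is the functional
equation `e_q(q z) = (1 + (q - 1) z) e_q(z)`. Iterating it gives
`e_q(z) = ∏_{n<N} (1 + (q - 1) q^(-n-1) z) · e_q(q^(-N) z)`, and `e_q(q^(-N) z) → e_q(0) = 1`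
yields the product formula. The factors are summably close to `1`, so the product vanishes exactly
where one of them does. Differentiating the functional equation at `w = q^n / (1 - q)` gives
`q e_q'(q w) = (q - 1) e_q(w) + (1 - q^n) e_q'(w)`; for `n = 0` only the first term survives and
for `n ≥ 1` only the second, so induction on `n` shows that `e_q'` does not vanish at the zeros. -/

/-- `[l]_q = 1 + q + ⋯ + q^(l-1)`. -/
noncomputable def qNat (q : ℝ) (l : ℕ) : ℝ := ∑ i ∈ Finset.range l, q ^ i

/-- `[n]_q! = ∏_{l=1}^{n} [l]_q`. -/
noncomputable def qFactorial (q : ℝ) : ℕ → ℝ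
  | 0 => 1
  | n + 1 => qFactorial q n * qNat q (n + 1)

/-- The complex `q`-exponential `e_q(z) = Σ_{n=0}^∞ z^n/[n]_q!`. -/
noncomputable def qExpC (q : ℝ) (z : ℂ) : ℂ := ∑' n : ℕ, z ^ n / (qFactorial q n : ℂ)

open Finset Filter Topology

lemma tprod_one_add_eq_zero_iff {ι R : Type*} [NormedCommRing R] [NormOneClass R]
    [NormMulClass R] [CompleteSpace R] {f : ι → R} (hf : Summable (‖f ·‖)) :
    ∏' i, (1 + f i) = 0 ↔ ∃ i, 1 + f i = 0 := by
  refine ⟨fun h ↦ ?_, tprod_of_exists_eq_zero⟩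
  by_contra! hne
  exact tprod_one_add_ne_zero_of_summable hne hf h

lemma qNat_mul_sub_one (q : ℝ) (n : ℕ) : qNat q n * (q - 1) = q ^ n - 1 :=
  geom_sum_mul q n

lemma qFactorial_succ (q : ℝ) (n : ℕ) : qFactorial q (n + 1) = qFactorial q n * qNat q (n + 1) :=
  rfl

lemma qExpC_zero (q : ℝ) : qExpC q 0 = 1 := by
  rw [qExpC, tsum_eq_single 0 fun n hn ↦ by simp [zero_pow hn]]
  simp [qFactorial]

noncomputable def qExpFactor (q : ℝ) (z : ℂ) (n : ℕ) : ℂ := 1 + (q - 1) * ((q : ℂ) ^ (n + 1))⁻¹ * z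

section

variable {q : ℝ}

lemma natCast_le_qNat (hq : 1 ≤ q) (n : ℕ) : (n : ℝ) ≤ qNat q n := by
  simpa [qNat] using card_nsmul_le_sum (range n) (q ^ ·) 1 fun i _ ↦ one_le_pow₀ hq

lemma factorial_le_qFactorial (hq : 1 ≤ q) (n : ℕ) : (n.factorial : ℝ) ≤ qFactorial q n := by
  induction n with
  | zero => simp [qFactorial]
  | succ n ih =>
    rw [Nat.factorial_succ, Nat.cast_mul, mul_comm, qFactorial_succ]
    exact mul_le_mul ih (natCast_le_qNat hq _) (by positivity) ((Nat.cast_nonneg _).trans ih)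

lemma qFactorial_pos (hq : 1 ≤ q) (n : ℕ) : 0 < qFactorial q n :=
  (Nat.cast_pos.2 n.factorial_pos).trans_le (factorial_le_qFactorial hq n)

lemma norm_qExpC_term_le (hq : 1 ≤ q) (z : ℂ) (n : ℕ) :
    ‖z ^ n / (qFactorial q n : ℂ)‖ ≤ ‖z‖ ^ n / n.factorial := by
  rw [norm_div, norm_pow, Complex.norm_real, Real.norm_of_nonneg (qFactorial_pos hq n).le]
  gcongr
  exact factorial_le_qFactorial hq n

lemma summable_qExpC_term (hq : 1 ≤ q) (z : ℂ) :
    Summable fun n : ℕ ↦ z ^ n / (qFactorial q n : ℂ) :=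
  .of_norm_bounded (Real.summable_pow_div_factorial ‖z‖) (norm_qExpC_term_le hq z)

lemma differentiable_qExpC (hq : 1 ≤ q) : Differentiable ℂ (qExpC q) := by
  intro z
  have hz : z ∈ Metric.ball (0 : ℂ) (‖z‖ + 1) := by simp
  refine (Complex.differentiableOn_tsum_of_summable_norm
    (Real.summable_pow_div_factorial (‖z‖ + 1))
    (fun n ↦ ((differentiable_pow n).div_const _).differentiableOn) Metric.isOpen_ball
    fun n w hw ↦ ?_).differentiableAt (Metric.isOpen_ball.mem_nhds hz)
  refine (norm_qExpC_term_le hq w n).trans ?_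
  gcongr
  exact (mem_ball_zero_iff.1 hw).le

lemma qExpC_term_ofReal_mul_succ (hq : 1 ≤ q) (z : ℂ) (n : ℕ) :
    (q * z) ^ (n + 1) / (qFactorial q (n + 1) : ℂ) =
      z ^ (n + 1) / (qFactorial q (n + 1) : ℂ) + (q - 1) * z * (z ^ n / (qFactorial q n : ℂ)) := by
  have hqNat : (qNat q (n + 1) : ℂ) * (q - 1) = q ^ (n + 1) - 1 := by
    exact_mod_cast qNat_mul_sub_one q (n + 1)
  have hF : (qFactorial q n : ℂ) ≠ 0 := by exact_mod_cast (qFactorial_pos hq n).ne'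
  have hN : (qNat q (n + 1) : ℂ) ≠ 0 := by
    exact_mod_cast ((Nat.cast_pos.2 n.succ_pos).trans_le (natCast_le_qNat hq (n + 1))).ne'
  rw [qFactorial_succ, Complex.ofReal_mul]
  field_simp
  linear_combination (-z ^ (n + 1)) * hqNat

lemma qExpC_ofReal_mul (hq : 1 ≤ q) (z : ℂ) :
    qExpC q (q * z) = (1 + (q - 1) * z) * qExpC q z := by
  have hs := summable_qExpC_term hq z
  have hs' := (summable_nat_add_iff 1).2 hs
  calc qExpC q (q * z)
      = 1 + ∑' n : ℕ, (q * z) ^ (n + 1) / (qFactorial q (n + 1) : ℂ) := by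
        rw [qExpC, (summable_qExpC_term hq _).tsum_eq_zero_add]
        simp [qFactorial]
    _ = 1 + ∑' n : ℕ, z ^ (n + 1) / (qFactorial q (n + 1) : ℂ) + (q - 1) * z * qExpC q z := by
        simp only [qExpC_term_ofReal_mul_succ hq, hs'.tsum_add (hs.mul_left _), tsum_mul_left,
          qExpC, add_assoc]
    _ = (1 + (q - 1) * z) * qExpC q z := by
        rw [qExpC, hs.tsum_eq_zero_add]
        simp only [pow_zero, qFactorial, Complex.ofReal_one, div_one]
        ring

lemma qExpC_eq_prod_range_mul (hq : 1 ≤ q) (z : ℂ) (N : ℕ) :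
    qExpC q z = (∏ n ∈ range N, qExpFactor q z n) * qExpC q (z / q ^ N) := by
  have hq0 : (q : ℂ) ≠ 0 := by exact_mod_cast (zero_lt_one.trans_le hq).ne'
  induction N with
  | zero => simp
  | succ N ih =>
    have hshift : z / q ^ N = q * (z / q ^ (N + 1)) := by field_simp; ring
    rw [ih, hshift, qExpC_ofReal_mul hq, prod_range_succ, qExpFactor]
    ring

lemma ofReal_mul_deriv_qExpC_ofReal_mul (hq : 1 ≤ q) (w : ℂ) :
    q * deriv (qExpC q) (q * w) =
      (q - 1) * qExpC q w + (1 + (q - 1) * w) * deriv (qExpC q) w := by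
  have hd := differentiable_qExpC hq
  have hL : HasDerivAt (fun w ↦ qExpC q (q * w)) (deriv (qExpC q) (q * w) * q) w := by
    simpa [Function.comp_def] using (hd _).hasDerivAt.comp w ((hasDerivAt_id' w).const_mul (q : ℂ))
  have hR : HasDerivAt (fun w ↦ (1 + (q - 1) * w) * qExpC q w)
      ((q - 1) * qExpC q w + (1 + (q - 1) * w) * deriv (qExpC q) w) w := by
    simpa using (((hasDerivAt_id' w).const_mul ((q : ℂ) - 1)).const_add 1).fun_mul (hd w).hasDerivAt
  rw [funext (qExpC_ofReal_mul hq)] at hL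
  rw [mul_comm]
  exact hL.unique hR

end

section

variable {q : ℝ} (hq : 1 < q)
include hq

lemma norm_ofReal_inv_lt_one : ‖(q : ℂ)⁻¹‖ < 1 := by
  rw [norm_inv, Complex.norm_real, Real.norm_of_nonneg (by linarith)]
  exact inv_lt_one_of_one_lt₀ hq

lemma summable_norm_qExpFactor_sub_one (z : ℂ) :
    Summable fun n ↦ ‖(q - 1) * ((q : ℂ) ^ (n + 1))⁻¹ * z‖ := by
  refine ((summable_geometric_of_norm_lt_one (norm_ofReal_inv_lt_one hq)).mul_left
    ((q - 1) * (q : ℂ)⁻¹ * z)).norm.congr fun n ↦ ?_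
  rw [pow_succ, mul_inv, inv_pow]
  ring_nf

lemma multipliable_qExpFactor (z : ℂ) : Multipliable (qExpFactor q z) :=
  multipliable_one_add_of_summable (summable_norm_qExpFactor_sub_one hq z)

lemma qExpC_eq_tprod (z : ℂ) : qExpC q z = ∏' n, qExpFactor q z n := by
  have hshrink : Tendsto (fun N : ℕ ↦ z / q ^ N) atTop (𝓝 0) := by
    simpa [div_eq_mul_inv, inv_pow] using
      (tendsto_pow_atTop_nhds_zero_of_norm_lt_one (norm_ofReal_inv_lt_one hq)).const_mul z
  have hlim := (multipliable_qExpFactor hq z).tendsto_prod_tprod_nat.mul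
    ((qExpC_zero q ▸ (differentiable_qExpC hq.le).continuous.tendsto 0).comp hshrink)
  rw [mul_one] at hlim
  exact tendsto_nhds_unique (tendsto_const_nhds.congr (qExpC_eq_prod_range_mul hq.le z)) hlim

lemma qExpFactor_eq_zero_iff (z : ℂ) (n : ℕ) :
    qExpFactor q z n = 0 ↔ z = q ^ (n + 1) / (1 - q) := by
  have hq0 : (q : ℂ) ≠ 0 := by exact_mod_cast (zero_lt_one.trans hq).ne'
  have hq1 : (1 : ℂ) - q ≠ 0 := by exact_mod_cast (sub_neg.2 hq).ne
  rw [qExpFactor, eq_div_iff hq1]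
  field_simp
  constructor <;> intro h <;> linear_combination -h

lemma qExpC_eq_zero_iff (z : ℂ) : qExpC q z = 0 ↔ ∃ n : ℕ, 1 ≤ n ∧ z = q ^ n / (1 - q) := by
  have hprod : ∏' n, qExpFactor q z n = 0 ↔ ∃ n, qExpFactor q z n = 0 :=
    tprod_one_add_eq_zero_iff (summable_norm_qExpFactor_sub_one hq z)
  simp only [qExpC_eq_tprod hq, hprod, qExpFactor_eq_zero_iff hq]
  constructor
  · rintro ⟨n, hn⟩
    exact ⟨n + 1, Nat.le_add_left 1 n, hn⟩
  · rintro ⟨n, hn, hz⟩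
    obtain ⟨m, rfl⟩ := Nat.exists_eq_add_of_le' hn
    exact ⟨m, hz⟩

lemma deriv_qExpC_pow_div_ne_zero (n : ℕ) (hn : 1 ≤ n) :
    deriv (qExpC q) (q ^ n / (1 - q)) ≠ 0 := by
  have hq1 : (1 : ℂ) - q ≠ 0 := by exact_mod_cast (sub_neg.2 hq).ne
  have hpow : ∀ m, 1 ≤ m → (q : ℂ) ^ m ≠ 1 := fun m hm ↦ by
    exact_mod_cast (one_lt_pow₀ hq (by omega)).ne'
  have hstep (m : ℕ) : q * deriv (qExpC q) (q ^ (m + 1) / (1 - q)) =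
      (q - 1) * qExpC q (q ^ m / (1 - q)) + (1 - q ^ m) * deriv (qExpC q) (q ^ m / (1 - q)) := by
    have hmul : (q : ℂ) ^ (m + 1) / (1 - q) = q * (q ^ m / (1 - q)) := by ring
    have hfactor : 1 + (q - 1) * ((q : ℂ) ^ m / (1 - q)) = 1 - q ^ m := by field_simp; ring
    rw [hmul, ofReal_mul_deriv_qExpC_ofReal_mul hq.le, hfactor]
  induction n, hn using Nat.le_induction with
  | base =>
    have hnonzero : qExpC q (1 / (1 - q)) ≠ 0 := by
      intro hzero
      obtain ⟨m, hm, h⟩ := (qExpC_eq_zero_iff hq _).1 hzero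
      exact hpow m hm ((div_left_inj' hq1).1 h).symm
    have h := hstep 0
    simp only [zero_add, pow_zero, sub_self, zero_mul, add_zero] at h
    refine right_ne_zero_of_mul (a := (q : ℂ)) ?_
    rw [h]
    exact mul_ne_zero (by exact_mod_cast (sub_pos.2 hq).ne') hnonzero
  | succ m hm ih =>
    have h := hstep m
    rw [(qExpC_eq_zero_iff hq _).2 ⟨m, hm, rfl⟩, mul_zero, zero_add] at h
    refine right_ne_zero_of_mul (a := (q : ℂ)) ?_
    rw [h]
    exact mul_ne_zero (sub_ne_zero.2 (hpow m hm).symm) ih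

end

/-- for real `q > 1`, the series `e_q(z) = Σ z^n/[n]_q!` converges for every
`z ∈ ℂ` and defines an entire function satisfying the product formula
`e_q(z) = Π_{n=0}^∞ (1 + (q-1) q^{-n-1} z)`; its zeros are exactly the points
`q^n/(1-q)` for integers `n ≥ 1`, each of which is a simple zero. -/
theorem qExpC_entire_product_zeros (q : ℝ) (hq : 1 < q) :
    (∀ z : ℂ, Summable fun n : ℕ => z ^ n / (qFactorial q n : ℂ)) ∧
    AnalyticOnNhd ℂ (qExpC q) Set.univ ∧
    (∀ z : ℂ, Multipliable fun n : ℕ => 1 + ((q : ℂ) - 1) * ((q : ℂ) ^ (n + 1))⁻¹ * z) ∧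
    (∀ z : ℂ, qExpC q z = ∏' n : ℕ, (1 + ((q : ℂ) - 1) * ((q : ℂ) ^ (n + 1))⁻¹ * z)) ∧
    (∀ z : ℂ, qExpC q z = 0 ↔ ∃ n : ℕ, 1 ≤ n ∧ z = (q : ℂ) ^ n / (1 - (q : ℂ))) ∧
    (∀ n : ℕ, 1 ≤ n → deriv (qExpC q) ((q : ℂ) ^ n / (1 - (q : ℂ))) ≠ 0) :=
  ⟨summable_qExpC_term hq.le,
    Complex.analyticOnNhd_univ_iff_differentiable.2 (differentiable_qExpC hq.le),
    multipliable_qExpFactor hq, qExpC_eq_tprod hq, qExpC_eq_zero_iff hq,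
    deriv_qExpC_pow_div_ne_zero hq⟩
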